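/- Let M be a left divisibility monoid with hypercube alphabet H. For any a, b in M with b = az for some hypercube z, and any t > 0, the length-t prefixes of the right normal forms of a and b satisfy d^H(a^[t], b^[t]) < 2, where d^H is the right directed distance. -/

import Mathlib

section Defs
variable {M : Type*} [Monoid M]

/-- `a` left-divides `b` (`b` is a right multiple of `a`). -/
def LDvd (a b : M) : Prop := ∃ d, b = a * d

/-- `a` right-divides `b` (`b` is a left multiple of `a`). -/
def RDvd (a b : M) : Prop := ∃ d, b = d * a

/-- `a` is an irreducible element of the monoid. -/
def IsIrred (a : M) : Prop := a ≠ 1 ∧ ∀ b c, a = b * c → b = 1 ∨ c = 1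

/-- `c` is a right lcm of `a` and `b`. -/
def IsRightLcm (a b c : M) : Prop :=
  LDvd a c ∧ LDvd b c ∧ ∀ m, LDvd a m → LDvd b m → LDvd c m

/-- `c` is a right lcm of the set `s`. -/
def IsRightLcmSet (s : Set M) (c : M) : Prop :=
  (∀ x ∈ s, LDvd x c) ∧ ∀ m, (∀ x ∈ s, LDvd x m) → LDvd c m

/-- A hypercube: a right lcm of a finite set of irreducible elements. -/
def IsHypercube (h : M) : Prop :=
  ∃ s : Finset M, (∀ x ∈ s, IsIrred x) ∧ IsRightLcmSet (↑s) h

/-- `h` is the maximal hypercube right-dividing `a`. -/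
def IsMaxHC (a h : M) : Prop :=
  IsHypercube h ∧ RDvd h a ∧ ∀ k, IsHypercube k → RDvd k a → RDvd k h

/-- The list `L = [h_p, …, h_1]` of nontrivial hypercubes is a right normal form:
`h_i` is the maximal hypercube right-dividing `h_p ⋯ h_i`. -/
def IsRNF (hmap : M → M) (L : List M) : Prop :=
  (∀ x ∈ L, IsHypercube x ∧ x ≠ 1) ∧
  ∀ n (hn : n < L.length), hmap ((L.take (n + 1)).prod) = L.get ⟨n, hn⟩

end Defs

/-- A left divisibility monoid: cancellative, generated by its finitely many
irreducibles, any two elements have a left gcd, and every set of left divisors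
is a finite distributive lattice under left divisibility. -/
def IsLDM (M : Type*) [Monoid M] : Prop :=
  (∀ a b c : M, a * b = a * c → b = c) ∧
  (∀ a b c : M, b * a = c * a → b = c) ∧
  (∃ S : Finset M, (∀ x ∈ S, IsIrred x) ∧ Submonoid.closure (S : Set M) = ⊤) ∧
  (∀ a b : M, ∃ g, LDvd g a ∧ LDvd g b ∧ ∀ c, LDvd c a → LDvd c b → LDvd c g) ∧
  (∀ a : M, {b : M | LDvd b a}.Finite) ∧
  (∀ a : M, ∃ i : DistribLattice {b : M // LDvd b a},
      ∀ x y : {b : M // LDvd b a}, i.le x y ↔ LDvd x.1 y.1)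

/-! The left divisors of an element form a finite distributive lattice in which irreducibles are
atoms and right multiplication by an irreducible is a covering relation. A hypercube is a join of
atoms, so its left divisors are again hypercubes and its coatoms have meet `1`. Together with
modularity this shows that every irreducible right divisor of `x * c` right-divides
`hmap x * c`, whence `hmap x * c = c' * hmap (x * c)` with `c'` a hypercube whenever `c` is one.
Stripping the last factors of the right normal forms of `a` and `a * z` therefore yields right
normal forms related by a hypercube again; so their lengths differ by at most one and, by
induction, equal-length prefixes are related by a single hypercube. -/

theorem IsIrred.isHypercube {M : Type*} [Monoid M] {j : M} (hj : IsIrred j) : IsHypercube j :=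
  ⟨{j}, by simpa using hj, fun x hx => Finset.mem_singleton.1 hx ▸ dvd_refl j,
    fun m hm => hm j (by simp)⟩

namespace IsLDM

variable {M : Type*} [Monoid M] (hM : IsLDM M)
include hM

theorem mul_left_cancel {a b c : M} (h : a * b = a * c) : b = c := hM.1 a b c h

theorem mul_right_cancel {a b c : M} (h : b * a = c * a) : b = c := hM.2.1 a b c h

theorem dvd_of_mul_dvd_mul_left {m a b : M} (h : m * a ∣ m * b) : a ∣ b := by
  obtain ⟨d, hd⟩ := h
  exact ⟨d, hM.mul_left_cancel (by rw [hd, mul_assoc])⟩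

/-- A copy of `{b // b ∣ y}` indexed by `hM`, so that the distributive lattice structure
provided by `hM` can be an instance. -/
@[ext]
structure LeftDivisors (_ : IsLDM M) (y : M) where
  val : M
  dvd : val ∣ y

def LeftDivisors.equivSubtype (y : M) : hM.LeftDivisors y ≃ {b : M // LDvd b y} where
  toFun u := ⟨u.val, u.dvd⟩
  invFun b := ⟨b.1, b.2⟩

noncomputable instance (y : M) : DistribLattice (hM.LeftDivisors y) :=
  letI := (hM.2.2.2.2.2 y).choose
  (LeftDivisors.equivSubtype hM y).distribLattice

namespace LeftDivisors

variable {y : M}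

theorem le_iff {u v : hM.LeftDivisors y} : u ≤ v ↔ u.val ∣ v.val :=
  (hM.2.2.2.2.2 y).choose_spec (equivSubtype hM y u) (equivSubtype hM y v)

instance : BoundedOrder (hM.LeftDivisors y) where
  top := ⟨y, dvd_refl y⟩
  le_top u := (le_iff hM).2 u.dvd
  bot := ⟨1, one_dvd y⟩
  bot_le u := (le_iff hM).2 (one_dvd u.val)

theorem val_sup_dvd {u v : hM.LeftDivisors y} {m : M} (hu : u.val ∣ m) (hv : v.val ∣ m) :
    (u ⊔ v).val ∣ m := by
  obtain ⟨g, hgy, hgm, hg⟩ := hM.2.2.2.1 y m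
  have : u ⊔ v ≤ ⟨g, hgy⟩ :=
    sup_le ((le_iff hM).2 (hg _ u.dvd hu)) ((le_iff hM).2 (hg _ v.dvd hv))
  exact ((le_iff hM).1 this).trans hgm

theorem isAtom_of_isIrred {u : hM.LeftDivisors y} (hu : IsIrred u.val) : IsAtom u := by
  refine ⟨fun h => hu.1 (congrArg LeftDivisors.val h), fun b hb => ?_⟩
  obtain ⟨d, hd⟩ := (le_iff hM).1 hb.le
  rcases hu.2 _ _ hd with h1 | h1
  · exact LeftDivisors.ext h1
  · exact absurd (LeftDivisors.ext (by rw [hd, h1, mul_one])) hb.ne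

theorem covBy_iff {u v : hM.LeftDivisors y} :
    u ⋖ v ↔ ∃ j, IsIrred j ∧ v.val = u.val * j := by
  constructor
  · intro h
    obtain ⟨j, hj⟩ := (le_iff hM).1 h.le
    refine ⟨j, ⟨fun hj1 => h.ne (LeftDivisors.ext (by rw [hj, hj1, mul_one])),
      fun p q hpq => ?_⟩, hj⟩
    have hpy : u.val * p ∣ y :=
      (dvd_mul_right _ q).trans (by rw [mul_assoc, ← hpq, ← hj]; exact v.dvd)
    rcases h.eq_or_eq (c := ⟨u.val * p, hpy⟩) ((le_iff hM).2 (dvd_mul_right _ _))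
      ((le_iff hM).2 ⟨q, by rw [hj, hpq, mul_assoc]⟩) with hw | hw
    · exact Or.inl (hM.mul_left_cancel ((congrArg LeftDivisors.val hw).trans (mul_one _).symm))
    · refine Or.inr (hM.mul_left_cancel (a := u.val * p) ?_)
      rw [mul_one, mul_assoc, ← hpq, ← hj]
      exact (congrArg LeftDivisors.val hw).symm
  · rintro ⟨j, hj, hv⟩
    have huv : u ≤ v := (le_iff hM).2 ⟨j, hv⟩
    refine covBy_of_eq_or_eq (huv.lt_of_ne fun h => hj.1 ?_) fun w huw hwv => ?_
    · exact (hM.mul_left_cancel (by rw [← hv, ← h, mul_one])).symm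
    obtain ⟨p, hp⟩ := (le_iff hM).1 huw
    obtain ⟨q, hq⟩ := (le_iff hM).1 hwv
    rcases hj.2 p q (hM.mul_left_cancel (by rw [← hv, hq, hp, mul_assoc])) with h1 | h1
    · exact Or.inl (LeftDivisors.ext (by rw [hp, h1, mul_one]))
    · exact Or.inr (LeftDivisors.ext (by rw [hq, h1, mul_one]))

theorem isRightLcmSet_sup (T : Finset (hM.LeftDivisors y)) :
    IsRightLcmSet (LeftDivisors.val '' (T : Set (hM.LeftDivisors y))) (T.sup id).val := by
  classical
  induction T using Finset.induction_on with
  | empty => exact ⟨by simp, fun m _ => one_dvd m⟩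
  | insert a T _ ih =>
    rw [Finset.sup_insert]
    refine ⟨?_, fun m hm => val_sup_dvd hM (hm _ ⟨a, by simp⟩) (ih.2 m fun x hx => hm x ?_)⟩
    · rintro _ ⟨x, hx, rfl⟩
      rcases Finset.mem_insert.1 hx with rfl | hx
      · exact (le_iff hM).1 le_sup_left
      · exact (le_iff hM).1 ((Finset.le_sup (f := id) hx).trans le_sup_right)
    · obtain ⟨b, hb, rfl⟩ := hx
      exact ⟨b, by simp [hb], rfl⟩

end LeftDivisors

theorem mul_eq_one {a b : M} (h : a * b = 1) : a = 1 ∧ b = 1 := by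
  have ha : a = 1 := congrArg LeftDivisors.val
    (le_bot_iff.1 (le_top : (⟨a, ⟨b, h.symm⟩⟩ : hM.LeftDivisors 1) ≤ ⊤))
  exact ⟨ha, by rwa [ha, one_mul] at h⟩

theorem rdvd_antisymm {a b : M} (hab : RDvd a b) (hba : RDvd b a) : a = b := by
  obtain ⟨d, rfl⟩ := hab
  obtain ⟨e, he⟩ := hba
  have hed : e * d = 1 := hM.mul_right_cancel (by rw [one_mul, mul_assoc, ← he])
  rw [(hM.mul_eq_one hed).2, one_mul]

theorem exists_finset_isIrred_sup_eq_top {k : M} (hk : IsHypercube k) :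
    ∃ S : Finset (hM.LeftDivisors k), (∀ a ∈ S, IsIrred a.val) ∧ S.sup id = ⊤ := by
  classical
  obtain ⟨s, hs, hlcm⟩ := hk
  let S : Finset (hM.LeftDivisors k) := s.attach.image fun x : s => ⟨x.1, hlcm.1 x x.2⟩
  refine ⟨S, fun a ha => ?_,
    top_le_iff.1 ((LeftDivisors.le_iff hM).2 (hlcm.2 _ fun x hx => ?_))⟩
  · obtain ⟨x, -, rfl⟩ := Finset.mem_image.1 ha
    exact hs x x.2
  · exact (LeftDivisors.le_iff hM).1
      (Finset.le_sup (f := id) (Finset.mem_image_of_mem _ (Finset.mem_attach s ⟨x, hx⟩)))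

theorem isHypercube_of_dvd {k u : M} (hk : IsHypercube k) (hu : u ∣ k) : IsHypercube u := by
  classical
  obtain ⟨S, hS, htop⟩ := hM.exists_finset_isIrred_sup_eq_top hk
  let U : hM.LeftDivisors k := ⟨u, hu⟩
  let T := S.filter (· ≤ U)
  have hU : U = T.sup id := by
    refine le_antisymm ?_ (Finset.sup_le fun i hi => (Finset.mem_filter.1 hi).2)
    calc U = U ⊓ S.sup id := by rw [htop, inf_top_eq]
      _ = S.sup fun i => U ⊓ i := Finset.sup_inf_distrib_left _ _ _
      _ ≤ T.sup id := Finset.sup_le fun i hi => by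
        rcases (LeftDivisors.isAtom_of_isIrred hM (hS i hi)).le_iff.1 inf_le_right with h | h
        · rw [h]; exact bot_le
        · rw [h]; exact Finset.le_sup (f := id) (Finset.mem_filter.2 ⟨hi, inf_eq_right.1 h⟩)
  refine ⟨T.map ⟨LeftDivisors.val, fun a b h => LeftDivisors.ext h⟩, fun x hx => ?_, ?_⟩
  · obtain ⟨a, ha, rfl⟩ := Finset.mem_map.1 hx
    exact hS a (Finset.mem_filter.1 ha).1
  · rw [Finset.coe_map, show u = (T.sup id).val from congrArg LeftDivisors.val hU]
    exact LeftDivisors.isRightLcmSet_sup hM T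

theorem eq_one_of_dvd_of_forall_dvd_coatom {k d : M} (hk : IsHypercube k) (hd : d ∣ k)
    (h : ∀ e j, IsIrred j → k = e * j → d ∣ e) : d = 1 := by
  classical
  obtain ⟨S, hS, htop⟩ := hM.exists_finset_isIrred_sup_eq_top hk
  let D : hM.LeftDivisors k := ⟨d, hd⟩
  suffices Disjoint D ⊤ from congrArg LeftDivisors.val (disjoint_top.1 this)
  rw [← htop]
  refine Finset.disjoint_sup_right.2 fun i hi => ?_
  have hatom a (ha : a ∈ S) := LeftDivisors.isAtom_of_isIrred hM (hS a ha)
  -- `e := ⨆ (S \ {i})` is disjoint from the atom `i`, hence covered by `i ⊔ e = ⊤`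
  have hdisj : Disjoint i ((S.erase i).sup id) := Finset.disjoint_sup_right.2 fun a ha =>
    (hatom i hi).disjoint_of_ne (hatom a (Finset.mem_of_mem_erase ha))
      (Finset.ne_of_mem_erase ha).symm
  have hsup : i ⊔ (S.erase i).sup id = ⊤ :=
    Finset.sup_insert.symm.trans (by rw [Finset.insert_erase hi, htop])
  have hcov : (S.erase i).sup id ⋖ ⊤ := by
    rw [← hsup]
    exact covBy_sup_of_inf_covBy_left (hdisj.eq_bot ▸ bot_covBy_iff.2 (hatom i hi))
  obtain ⟨j, hj, hkj⟩ := (LeftDivisors.covBy_iff hM).1 hcov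
  exact (hdisj.mono_right ((LeftDivisors.le_iff hM).2 (h _ j hj hkj))).symm

theorem rdvd_mul_of_isIrred {x h c j : M} (hxh : ∀ i, IsIrred i → RDvd i x → RDvd i h)
    (hj : IsIrred j) (hjxc : RDvd j (x * c)) : RDvd j (h * c) := by
  obtain ⟨e, he⟩ := hjxc
  by_cases hxe : x ∣ e
  · obtain ⟨e', rfl⟩ := hxe
    have hc : c = e' * j := hM.mul_left_cancel (by rw [he, mul_assoc])
    exact ⟨h * e', by rw [hc, mul_assoc]⟩
  -- `e` is a coatom of the divisors of `x * c` not above `x`, so by modularity `x ⊓ e ⋖ x`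
  let X : hM.LeftDivisors (x * c) := ⟨x, dvd_mul_right x c⟩
  let E : hM.LeftDivisors (x * c) := ⟨e, ⟨j, he⟩⟩
  have hE : E ⋖ ⊤ := (LeftDivisors.covBy_iff hM).2 ⟨j, hj, he⟩
  have hEX : E ⊔ X = ⊤ := (hE.eq_or_eq le_sup_left le_top).resolve_left fun h =>
    hxe ((LeftDivisors.le_iff hM).1 (sup_eq_left.1 h))
  obtain ⟨i, hi, hx⟩ := (LeftDivisors.covBy_iff hM).1 (inf_covBy_of_covBy_sup_left (hEX ▸ hE))
  obtain ⟨f, hf⟩ := (LeftDivisors.le_iff hM).1 (inf_le_left : E ⊓ X ≤ E)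
  have hic : i * c = f * j := hM.mul_left_cancel (a := (E ⊓ X).val) <| by
    rw [← mul_assoc, ← hx, ← mul_assoc, ← hf]
    exact he
  obtain ⟨h', hh'⟩ := hxh i hi ⟨_, hx⟩
  exact ⟨h' * f, by rw [hh', mul_assoc, hic, ← mul_assoc]⟩

theorem rdvd_of_isHypercube {m k x w : M} (hk : IsHypercube k) (hy : m * k = x * w)
    (hw : ∀ j, IsIrred j → RDvd j (m * k) → RDvd j w) : RDvd k w := by
  let X : hM.LeftDivisors (m * k) := ⟨x, ⟨w, hy⟩⟩
  let Mm : hM.LeftDivisors (m * k) := ⟨m, dvd_mul_right m k⟩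
  obtain ⟨d, hd⟩ := (LeftDivisors.le_iff hM).1 (le_sup_right : Mm ≤ X ⊔ Mm)
  -- `x ⊔ m = m * d`, and `d` divides every coatom `e` of `k` because `x` divides `m * e`
  have hd1 : d = 1 := by
    refine hM.eq_one_of_dvd_of_forall_dvd_coatom hk
      (hM.dvd_of_mul_dvd_mul_left (hd ▸ (X ⊔ Mm).dvd)) fun e j hj hkej => ?_
    obtain ⟨w', rfl⟩ := hw j hj ⟨m * e, by rw [hkej, mul_assoc]⟩
    have hxe : x * w' = m * e := hM.mul_right_cancel (by rw [mul_assoc, ← hy, hkej, mul_assoc])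
    have hme : m * e ∣ m * k := ⟨j, by rw [hkej, mul_assoc]⟩
    have hle : X ⊔ Mm ≤ (⟨m * e, hme⟩ : hM.LeftDivisors (m * k)) :=
      sup_le ((LeftDivisors.le_iff hM).2 ⟨w', hxe.symm⟩)
        ((LeftDivisors.le_iff hM).2 (dvd_mul_right m e))
    exact hM.dvd_of_mul_dvd_mul_left (hd ▸ (LeftDivisors.le_iff hM).1 hle)
  obtain ⟨c, rfl⟩ : x ∣ m := by
    simpa [hd, hd1] using (LeftDivisors.le_iff hM).1 (le_sup_left : X ≤ X ⊔ Mm)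
  exact ⟨c, hM.mul_left_cancel (by rw [← hy, mul_assoc])⟩

variable {hmap : M → M}

theorem hmap_one (hspec : ∀ a : M, IsMaxHC a (hmap a)) : hmap 1 = 1 := by
  obtain ⟨d, hd⟩ := (hspec 1).2.1
  exact (hM.mul_eq_one hd.symm).2

theorem hmap_eq_self (hspec : ∀ a : M, IsMaxHC a (hmap a)) {c : M} (hc : IsHypercube c) :
    hmap c = c :=
  hM.rdvd_antisymm (hspec c).2.1 ((hspec c).2.2 c hc ⟨1, (one_mul c).symm⟩)

/-- Proposition 24(ii). -/
theorem exists_hmap_mul (hspec : ∀ a : M, IsMaxHC a (hmap a)) (x : M) {c : M}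
    (hc : IsHypercube c) : ∃ c', IsHypercube c' ∧ hmap x * c = c' * hmap (x * c) := by
  obtain ⟨m, hm⟩ := (hspec (x * c)).2.1
  obtain ⟨x₀, hx₀⟩ := (hspec x).2.1
  have hy : m * hmap (x * c) = x₀ * (hmap x * c) := by rw [← hm, ← mul_assoc, ← hx₀]
  obtain ⟨c', hc'⟩ := hM.rdvd_of_isHypercube (hspec (x * c)).1 hy fun j hj hjy =>
    hM.rdvd_mul_of_isIrred (fun i hi hix => (hspec x).2.2 i hi.isHypercube hix) hj (hm ▸ hjy)
  obtain ⟨k, hk⟩ := (hspec (x * c)).2.2 c hc ⟨x, rfl⟩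
  have hxk : hmap x = c' * k := hM.mul_right_cancel (by rw [hc', hk, mul_assoc])
  exact ⟨c', hM.isHypercube_of_dvd (hspec x).1 ⟨k, hxk⟩, hc'⟩

end IsLDM

namespace IsRNF

variable {M : Type*} [Monoid M] {hmap : M → M}

theorem dropLast {L : List M} (hL : IsRNF hmap L) : IsRNF hmap L.dropLast := by
  refine ⟨fun x hx => hL.1 x (List.dropLast_subset L hx), fun n hn => ?_⟩
  rw [List.length_dropLast] at hn
  have htake : L.dropLast.take (n + 1) = L.take (n + 1) := by
    rw [List.dropLast_eq_take, List.take_take, min_eq_left (by omega)]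
  rw [htake, hL.2 n (by omega)]
  simp [List.getElem_dropLast]

theorem eq_nil_of_prod_eq_one (hM : IsLDM M) {L : List M} (hL : IsRNF hmap L) (hp : L.prod = 1) :
    L = [] := by
  cases L with
  | nil => rfl
  | cons a l =>
    rw [List.prod_cons] at hp
    exact absurd (hM.mul_eq_one hp).1 (hL.1 a List.mem_cons_self).2

variable (hM : IsLDM M) (hspec : ∀ a : M, IsMaxHC a (hmap a))
include hM hspec

theorem dropLast_prod_mul {L : List M} (hL : IsRNF hmap L) :
    L.dropLast.prod * hmap L.prod = L.prod := by
  rcases eq_or_ne L [] with rfl | hne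
  · simp [hM.hmap_one hspec]
  have hlen : L.length - 1 + 1 = L.length := Nat.succ_pred_eq_of_pos (List.length_pos_iff.2 hne)
  have hlast := hL.2 (L.length - 1) (by omega)
  rw [hlen, List.take_length] at hlast
  rw [hlast, List.get_eq_getElem, ← List.getLast_eq_getElem hne, ← List.prod_concat,
    List.concat_eq_append, List.dropLast_concat_getLast]

theorem exists_dropLast_prod_mul {L L' : List M} (hL : IsRNF hmap L) (hL' : IsRNF hmap L')
    {c : M} (hc : IsHypercube c) (hp : L.prod * c = L'.prod) :
    ∃ c', IsHypercube c' ∧ L.dropLast.prod * c' = L'.dropLast.prod := by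
  obtain ⟨c', hc', h⟩ := hM.exists_hmap_mul hspec L.prod hc
  refine ⟨c', hc', hM.mul_right_cancel (a := hmap L'.prod) ?_⟩
  rw [hL'.dropLast_prod_mul hM hspec, ← hp, mul_assoc, ← h, ← mul_assoc,
    hL.dropLast_prod_mul hM hspec]

theorem length_le_one {L : List M} (hL : IsRNF hmap L) (hc : IsHypercube L.prod) :
    L.length ≤ 1 := by
  have h := hL.dropLast_prod_mul hM hspec
  rw [hM.hmap_eq_self hspec hc] at h
  have := hL.dropLast.eq_nil_of_prod_eq_one hM (hM.mul_right_cancel (h.trans (one_mul _).symm))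
  have := congrArg List.length this
  rw [List.length_dropLast, List.length_nil] at this
  omega

theorem length_le_length {L L' : List M} (hL : IsRNF hmap L) (hL' : IsRNF hmap L') {c : M}
    (hc : IsHypercube c) (hp : L.prod * c = L'.prod) :
    L.length ≤ L'.length ∧ L'.length ≤ L.length + 1 := by
  rcases eq_or_ne L' [] with rfl | hL'e
  · rw [hL.eq_nil_of_prod_eq_one hM (hM.mul_eq_one hp).1]
    simp
  rcases eq_or_ne L [] with rfl | hLe
  · rw [List.prod_nil, one_mul] at hp
    exact ⟨Nat.zero_le _, hL'.length_le_one hM hspec (hp ▸ hc)⟩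
  obtain ⟨c', hc', hp'⟩ := hL.exists_dropLast_prod_mul hM hspec hL' hc hp
  have := hL.dropLast.length_le_length hL'.dropLast hc' hp'
  simp only [List.length_dropLast] at this
  have := List.length_pos_iff.2 hLe
  have := List.length_pos_iff.2 hL'e
  omega
termination_by L'.length
decreasing_by simp only [List.length_dropLast]; have := List.length_pos_iff.2 hL'e; omega

theorem exists_take_prod {L L' : List M} (hL : IsRNF hmap L) (hL' : IsRNF hmap L') {c : M}
    (hc : IsHypercube c) (hp : L.prod * c = L'.prod) (t : ℕ) :
    ∃ d, IsHypercube d ∧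
      ((L.take t).prod * d = (L'.take t).prod ∨ (L.take t).prod = (L'.take t).prod * d) := by
  obtain ⟨hlen, hlen'⟩ := hL.length_le_length hM hspec hL' hc hp
  by_cases ht : t < L.length
  · obtain ⟨c', hc', hp'⟩ := hL.exists_dropLast_prod_mul hM hspec hL' hc hp
    obtain ⟨d, hd, h⟩ := hL.dropLast.exists_take_prod hL'.dropLast hc' hp' t
    rw [List.dropLast_eq_take, List.take_take, min_eq_left (by omega), List.dropLast_eq_take,
      List.take_take, min_eq_left (by omega)] at h
    exact ⟨d, hd, h⟩
  rw [List.take_of_length_le (not_lt.1 ht)]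
  by_cases ht' : L'.length ≤ t
  · rw [List.take_of_length_le ht']
    exact ⟨c, hc, Or.inl hp⟩
  -- here `L'` has exactly one more factor than `L`, and `c` right-divides that last factor
  rw [show t = L'.length - 1 by omega, ← List.dropLast_eq_take]
  obtain ⟨k, hk⟩ := (hspec (L.prod * c)).2.2 c hc ⟨L.prod, rfl⟩
  refine ⟨k, hM.isHypercube_of_dvd (hspec _).1 ⟨c, hk⟩,
    Or.inr (hM.mul_right_cancel (a := c) ?_)⟩
  rw [mul_assoc, ← hk, hp, hL'.dropLast_prod_mul hM hspec]
termination_by L.length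
decreasing_by simp only [List.length_dropLast]; omega

end IsRNF

theorem stmt_15_general {M : Type*} [Monoid M] (hM : IsLDM M)
    (hmap : M → M) (hspec : ∀ a : M, IsMaxHC a (hmap a))
    {a b z : M} (hz : IsHypercube z) (hb : b = a * z)
    {La Lb : List M} (hLa : IsRNF hmap La ∧ La.prod = a)
    (hLb : IsRNF hmap Lb ∧ Lb.prod = b) (t : ℕ) :
    ∃ w : List M, (∀ x ∈ w, IsHypercube x) ∧ w.length < 2 ∧
      ((La.take t).prod * w.prod = (Lb.take t).prod ∨
       (La.take t).prod = (Lb.take t).prod * w.prod) := by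
  obtain ⟨d, hd, h⟩ :=
    hLa.1.exists_take_prod hM hspec hLb.1 hz (by rw [hLa.2, hLb.2, hb]) t
  exact ⟨[d], by simpa using hd, by simp, by simpa using h⟩

/-- Right directed fellow traveller property with constant 2: prefixes of the
right normal forms of `a` and `a * z` stay at right directed distance < 2. -/
theorem stmt_15 {M : Type*} [Monoid M] (hM : IsLDM M)
    (hmap : M → M) (hspec : ∀ a : M, IsMaxHC a (hmap a))
    {a b z : M} (hz : IsHypercube z) (hb : b = a * z)
    {La Lb : List M} (hLa : IsRNF hmap La ∧ La.prod = a)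
    (hLb : IsRNF hmap Lb ∧ Lb.prod = b) (t : ℕ) (ht : 0 < t) :
    ∃ w : List M, (∀ x ∈ w, IsHypercube x) ∧ w.length < 2 ∧
      ((La.take t).prod * w.prod = (Lb.take t).prod ∨
       (La.take t).prod = (Lb.take t).prod * w.prod) :=
  stmt_15_general hM hmap hspec hz hb hLa hLb t
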